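/- Let X and Y be persistence modules over a field K, each with N intervals, such that within each of X and Y all critical values (births and deaths) are pairwise distinct and any two of them differ by more than 2ε. Let α : X → Y and β : Y → X form an ε-interleaving, and let B_X = {x_1,…,x_N} and B_Y^{old} = {y_1,…,y_N} be bases such that |birth(x_i) − birth(y_i)| < ε and |death(x_i) − death(y_i)| < ε for all i. Then Mat_{B_X}^{B_Y^{old}}(α) is a basis transformation matrix for Y with respect to B_Y^{old}, and for the transformed basis B_Y^{new} = Mat_{B_X}^{B_Y^{old}}(α)(B_Y^{old}), both Mat_{B_X}^{B_Y^{new}}(α) and Mat_{B_Y^{new}}^{B_X}(β) are the identity matrix. -/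

import Mathlib

open scoped BigOperators

universe u v

/-- A persistence module over a field `K`. -/
structure PersistenceModule (K : Type u) [Field K] where
  space : ℝ → Type v
  [instAdd : ∀ t, AddCommGroup (space t)]
  [instMod : ∀ t, Module K (space t)]
  trans : ∀ s t : ℝ, s ≤ t → (space s →ₗ[K] space t)
  trans_self : ∀ (t : ℝ) (h : t ≤ t), trans t t h = LinearMap.id
  trans_trans : ∀ (r s t : ℝ) (hrs : r ≤ s) (hst : s ≤ t) (x : space r),
      trans s t hst (trans r s hrs x) = trans r t (hrs.trans hst) x

attribute [instance] PersistenceModule.instAdd PersistenceModule.instMod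

namespace PersistenceModule

variable {K : Type u} [Field K]

/-- `x ∈ X_t` is born at `t` if it is not in the image of any earlier transition map. -/
def BornAt (X : PersistenceModule K) (t : ℝ) (x : X.space t) : Prop :=
  ∀ (s : ℝ) (h : s < t), x ∉ Set.range (X.trans s t h.le)

/-- The death time of an element `x ∈ X_t`. -/
noncomputable def death (X : PersistenceModule K) (t : ℝ) (x : X.space t) : ℝ :=
  sInf {s : ℝ | ∃ h : t < s, X.trans t s h.le x = 0}

/-- `x` is a basis of `X` realizing the intervals `[b i, d i)`. -/
def IsBasisFamily {ι : Type*} (X : PersistenceModule K) (b d : ι → ℝ)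
    (x : ∀ i, X.space (b i)) : Prop :=
  (∀ i, X.BornAt (b i) (x i)) ∧
  (∀ i, X.death (b i) (x i) = d i) ∧
  (∀ t : ℝ,
    LinearIndependent K
      (fun i : {i : ι // b i ≤ t ∧ t < d i} => X.trans (b i.1) t i.2.1 (x i.1)) ∧
    Submodule.span K (Set.range
      (fun i : {i : ι // b i ≤ t ∧ t < d i} => X.trans (b i.1) t i.2.1 (x i.1))) = ⊤)

open scoped Classical in
/-- The image of the basis element `x j` at height `h` (or `0` if not yet born). -/
noncomputable def pushTo {ι : Type*} (X : PersistenceModule K) (b : ι → ℝ)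
    (x : ∀ i, X.space (b i)) (h : ℝ) (j : ι) : X.space h :=
  if hb : b j ≤ h then X.trans (b j) h hb (x j) else 0

end PersistenceModule

/-- An `ε`-morphism of persistence modules. -/
structure EpsMorphism {K : Type u} [Field K] (X Y : PersistenceModule K) (ε : ℝ) where
  maps : ∀ r r' : ℝ, r + ε = r' → (X.space r →ₗ[K] Y.space r')
  comm : ∀ (s t s' t' : ℝ) (hs : s + ε = s') (ht : t + ε = t') (hst : s ≤ t)
      (x : X.space s),
    maps t t' ht (X.trans s t hst x) = Y.trans s' t' (by linarith) (maps s s' hs x)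

/-- A pair of `ε`-morphisms forming an `ε`-interleaving. -/
def IsInterleaving {K : Type u} [Field K] (X Y : PersistenceModule K) (ε : ℝ)
    (F : EpsMorphism X Y ε) (G : EpsMorphism Y X ε) : Prop :=
  (∀ (r r'' : ℝ) (h : r + ε + ε = r'') (hr : r ≤ r'') (x : X.space r),
      G.maps (r + ε) r'' (by linarith) (F.maps r (r + ε) rfl x) = X.trans r r'' hr x) ∧
  (∀ (r r'' : ℝ) (h : r + ε + ε = r'') (hr : r ≤ r'') (y : Y.space r),
      F.maps (r + ε) r'' (by linarith) (G.maps r (r + ε) rfl y) = Y.trans r r'' hr y)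

/-- `A` is the matrix of the `ε`-morphism `α` with respect to the bases `x` of `X`
(realizing `[bX i, dX i)`) and `y` of `Y` (realizing `[bY j, dY j)`). -/
def IsMatrixOf {K : Type u} [Field K] {X Y : PersistenceModule K} {ε : ℝ}
    {N M : ℕ} (α : EpsMorphism X Y ε)
    (bX dX : Fin N → ℝ) (x : ∀ i, X.space (bX i))
    (bY dY : Fin M → ℝ) (y : ∀ j, Y.space (bY j))
    (A : Matrix (Fin M) (Fin N) K) : Prop :=
  (∀ i, α.maps (bX i) (bX i + ε) rfl (x i)
      = ∑ j, A j i • Y.pushTo bY y (bX i + ε) j) ∧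
  (∀ (j : Fin M) (i : Fin N), ¬ (bY j ≤ bX i + ε ∧ bX i + ε < dY j) → A j i = 0)

/-- A basis transformation matrix. -/
def IsBasisTransformMatrix {K : Type u} [Field K] {N : ℕ} (b d : Fin N → ℝ)
    (A : Matrix (Fin N) (Fin N) K) : Prop :=
  (∀ i, A i i ≠ 0) ∧ ∀ j i, A j i ≠ 0 → b j ≤ b i ∧ d j ≤ d i

/-- The transformed family `A(B)`: `x_i^new = ∑ j A j i • φ(x_j)`. -/
noncomputable def transformBasis {K : Type u} [Field K] {N : ℕ} (X : PersistenceModule K)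
    (b : Fin N → ℝ) (x : ∀ i, X.space (b i)) (A : Matrix (Fin N) (Fin N) K)
    (i : Fin N) : X.space (b i) :=
  ∑ j, A j i • X.pushTo b x (b i) j

/-- The elementary matrix `e_{lk}^μ`: identity with extra entry `μ` in position `(k, l)`. -/
def eMat {K : Type u} [Field K] {N : ℕ} (l k : Fin N) (μ : K) : Matrix (Fin N) (Fin N) K :=
  1 + Matrix.single k l μ

/-! The matrix of `α` has an entry `(j, i)` only if `y_j` is born by `b(x_i) + ε` and, since
`α` commutes with the transition maps, only if `y_j` dies by `d(x_i) + ε`. With critical values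
more than `2ε` apart and the intervals matched within `ε`, this forces the matrix to be
triangular in the required sense. Composing with `β` gives `φ^{2ε}`, whose matrix is the
identity on the intervals alive at `b(x_i) + 2ε`; this yields the nonzero diagonal and, read in
the transformed basis, both identity matrices. -/

open Filter Topology Matrix

namespace PersistenceModule

variable {K : Type u} [Field K] {X : PersistenceModule K} {ι : Type*} {b d : ι → ℝ}
  {x : ∀ i, X.space (b i)}

theorem pushTo_of_le {t : ℝ} {j : ι} (h : b j ≤ t) :
    X.pushTo b x t j = X.trans (b j) t h (x j) := dif_pos h

theorem pushTo_of_not_le {t : ℝ} {j : ι} (h : ¬ b j ≤ t) : X.pushTo b x t j = 0 := dif_neg h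

theorem trans_pushTo {s t : ℝ} {j : ι} (hjs : b j ≤ s) (hst : s ≤ t) :
    X.trans s t hst (X.pushTo b x s j) = X.pushTo b x t j := by
  rw [pushTo_of_le hjs, pushTo_of_le (hjs.trans hst), X.trans_trans]

theorem trans_sum_smul_pushTo [Fintype ι] {s t : ℝ} (hst : s ≤ t) (c : ι → K)
    (hc : ∀ j, c j ≠ 0 → b j ≤ s) :
    X.trans s t hst (∑ j, c j • X.pushTo b x s j) = ∑ j, c j • X.pushTo b x t j := by
  rw [map_sum]
  refine Finset.sum_congr rfl fun j _ => ?_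
  by_cases hj : c j = 0
  · simp [hj]
  · rw [map_smul, trans_pushTo (hc j hj)]

theorem sum_one_smul_pushTo [Fintype ι] [DecidableEq ι] (t : ℝ) (i : ι) :
    ∑ k, (1 : Matrix ι ι K) k i • X.pushTo b x t k = X.pushTo b x t i := by
  rw [Finset.sum_eq_single i (fun k _ hki => by rw [Matrix.one_apply_ne hki, zero_smul])
    (absurd (Finset.mem_univ i)), Matrix.one_apply_eq, one_smul]

namespace IsBasisFamily

noncomputable def basisAt (hX : X.IsBasisFamily b d x) (t : ℝ) :
    Module.Basis {i // b i ≤ t ∧ t < d i} K (X.space t) :=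
  .mk (hX.2.2 t).1 (hX.2.2 t).2.ge

theorem basisAt_apply (hX : X.IsBasisFamily b d x) {t : ℝ} (i : {i // b i ≤ t ∧ t < d i}) :
    hX.basisAt t i = X.trans (b i) t i.2.1 (x i) :=
  Module.Basis.mk_apply _ _ _

theorem sum_smul_pushTo_eq_sum_basisAt [Fintype ι] (hX : X.IsBasisFamily b d x) {t : ℝ}
    (c : ι → K) (hc : ∀ k, t ∉ Set.Ico (b k) (d k) → c k • X.pushTo b x t k = 0) :
    ∑ k, c k • X.pushTo b x t k
      = ∑ k : {i // b i ≤ t ∧ t < d i}, c k • hX.basisAt t k := by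
  classical
  rw [← Fintype.sum_subtype_add_sum_subtype (fun k => b k ≤ t ∧ t < d k),
    Finset.sum_eq_zero fun (k : {k // ¬(b k ≤ t ∧ t < d k)}) _ => hc k k.2, add_zero]
  exact Finset.sum_congr rfl fun k _ => by rw [basisAt_apply, pushTo_of_le k.2.1]

theorem exists_eq_sum_smul_pushTo [Fintype ι] (hX : X.IsBasisFamily b d x) {t : ℝ}
    (v : X.space t) :
    ∃ c : ι → K, (∀ k, t ∉ Set.Ico (b k) (d k) → c k = 0) ∧
      v = ∑ k, c k • X.pushTo b x t k := by
  classical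
  refine ⟨fun k => if h : b k ≤ t ∧ t < d k then (hX.basisAt t).repr v ⟨k, h⟩ else 0,
    fun k hk => dif_neg hk, ?_⟩
  rw [hX.sum_smul_pushTo_eq_sum_basisAt _ fun k (hk : ¬(b k ≤ t ∧ t < d k)) => by
    rw [dif_neg hk, zero_smul]]
  conv_lhs => rw [← (hX.basisAt t).sum_repr v]
  exact Finset.sum_congr rfl fun k _ => by rw [dif_pos k.2]

theorem eq_zero_of_forall_trans_eq_zero [Finite ι] (hX : X.IsBasisFamily b d x) {t : ℝ}
    (v : X.space t) (hv : ∀ s (hts : t < s), X.trans t s hts.le v = 0) : v = 0 := by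
  have := Fintype.ofFinite ι
  have hlater : ∀ᶠ s in 𝓝[>] t, ∀ i, t < d i → s < d i := eventually_all.2 fun i => by
    by_cases hi : t < d i
    · exact (eventually_lt_nhds hi).filter_mono nhdsWithin_le_nhds |>.mono fun _ h _ => h
    · exact .of_forall fun _ h => absurd h hi
  obtain ⟨s, hs, hts⟩ := (hlater.and self_mem_nhdsWithin).exists
  obtain ⟨c, hc, rfl⟩ := hX.exists_eq_sum_smul_pushTo v
  have hcs : ∀ k, s ∉ Set.Ico (b k) (d k) → c k = 0 := fun k hk => by
    by_contra hck
    have hk' := not_not.1 (mt (hc k) hck)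
    exact hk ⟨hk'.1.trans hts.le, hs k hk'.2⟩
  have h0 : ∑ k : {i // b i ≤ s ∧ s < d i}, c k • hX.basisAt s k = 0 := by
    rw [← hX.sum_smul_pushTo_eq_sum_basisAt c fun k hk => by rw [hcs k hk, zero_smul],
      ← trans_sum_smul_pushTo hts.le c fun k hk => (not_not.1 (mt (hc k) hk)).1, hv s hts]
  have hc0 := Fintype.linearIndependent_iff.1 (hX.basisAt s).linearIndependent _ h0
  refine Finset.sum_eq_zero fun k _ => ?_
  by_cases hk : s ∈ Set.Ico (b k) (d k)
  · rw [hc0 ⟨k, hk⟩, zero_smul]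
  · rw [hcs k hk, zero_smul]

theorem eq_zero_of_forall_death_le (hX : X.IsBasisFamily b d x) {t : ℝ} (ht : ∀ i, d i ≤ t)
    (v : X.space t) : v = 0 :=
  have : IsEmpty {i // b i ≤ t ∧ t < d i} := ⟨fun i => (i.2.2.trans_le (ht i)).false⟩
  (hX.basisAt t).ext_elem fun i => isEmptyElim i

theorem trans_eq_zero_of_death_lt [Finite ι] (hX : X.IsBasisFamily b d x) {i : ι} {s : ℝ}
    (hbs : b i ≤ s) (hds : d i < s) : X.trans (b i) s hbs (x i) = 0 := by
  -- beyond every death `X` vanishes, so the set whose infimum is `d i` is nonempty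
  obtain ⟨M, hM⟩ := (Set.finite_range d).bddAbove
  have hT : max M s + 1 ∈ {s | ∃ h : b i < s, X.trans (b i) s h.le (x i) = 0} :=
    ⟨by linarith [le_max_right M s], hX.eq_zero_of_forall_death_le
      (fun j => (hM ⟨j, rfl⟩).trans (le_max_left M s |>.trans (by linarith))) _⟩
  have hds' : X.death (b i) (x i) < s := (hX.2.1 i).symm ▸ hds
  obtain ⟨s₀, ⟨hbs₀, hs₀⟩, hs₀s⟩ := exists_lt_of_csInf_lt ⟨_, hT⟩ hds'
  rw [← X.trans_trans (b i) s₀ s hbs₀.le hs₀s.le, hs₀, map_zero]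

/-- The infimum defining the death time is attained. -/
theorem trans_eq_zero_of_death_le [Finite ι] (hX : X.IsBasisFamily b d x) {i : ι} {s : ℝ}
    (hbs : b i ≤ s) (hds : d i ≤ s) : X.trans (b i) s hbs (x i) = 0 :=
  hX.eq_zero_of_forall_trans_eq_zero _ fun r hsr => by
    rw [X.trans_trans]
    exact hX.trans_eq_zero_of_death_lt _ (hds.trans_lt hsr)

theorem pushTo_eq_zero [Finite ι] (hX : X.IsBasisFamily b d x) {t : ℝ} {k : ι}
    (hk : t ∉ Set.Ico (b k) (d k)) : X.pushTo b x t k = 0 := by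
  by_cases hbk : b k ≤ t
  · rw [pushTo_of_le hbk, hX.trans_eq_zero_of_death_le hbk (not_lt.1 fun h => hk ⟨hbk, h⟩)]
  · exact pushTo_of_not_le hbk

theorem sum_smul_pushTo_inj [Fintype ι] (hX : X.IsBasisFamily b d x) {t : ℝ} {c c' : ι → K} :
    ∑ k, c k • X.pushTo b x t k = ∑ k, c' k • X.pushTo b x t k ↔
      ∀ k, t ∈ Set.Ico (b k) (d k) → c k = c' k := by
  have hdead (c : ι → K) : ∀ k, t ∉ Set.Ico (b k) (d k) → c k • X.pushTo b x t k = 0 :=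
    fun k hk => by rw [hX.pushTo_eq_zero hk, smul_zero]
  rw [hX.sum_smul_pushTo_eq_sum_basisAt c (hdead c),
    hX.sum_smul_pushTo_eq_sum_basisAt c' (hdead c'),
    ← (hX.basisAt t).equivFun_symm_apply, ← (hX.basisAt t).equivFun_symm_apply,
    (hX.basisAt t).equivFun.symm.injective.eq_iff, funext_iff, Subtype.forall]
  rfl

end IsBasisFamily

end PersistenceModule

open PersistenceModule

/-- `Sum.elim b d` enumerates the critical values; they are pairwise more than `2ε` apart. -/
def CriticalValuesSeparated {ι : Type*} (ε : ℝ) (b d : ι → ℝ) : Prop :=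
  ∀ p q : ι ⊕ ι, p ≠ q → 2 * ε < |Sum.elim b d p - Sum.elim b d q|

namespace CriticalValuesSeparated

variable {ι : Type*} {ε : ℝ} {b d : ι → ℝ}

theorem eq_of_abs_sub_le (h : CriticalValuesSeparated ε b d) {p q : ι ⊕ ι}
    (hpq : |Sum.elim b d p - Sum.elim b d q| ≤ 2 * ε) : p = q :=
  by_contra fun hne => (h p q hne).not_ge hpq

theorem le_of_le_add (h : CriticalValuesSeparated ε b d) {p q : ι ⊕ ι}
    (hpq : Sum.elim b d p ≤ Sum.elim b d q + 2 * ε) : Sum.elim b d p ≤ Sum.elim b d q := by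
  by_contra! hlt
  have hpq : p = q := h.eq_of_abs_sub_le (abs_sub_le_iff.2 ⟨by linarith, by linarith⟩)
  exact hlt.ne' (congrArg _ hpq)

theorem eq_of_abs_birth_sub_le (h : CriticalValuesSeparated ε b d) {i j : ι}
    (hij : |b i - b j| ≤ 2 * ε) : i = j :=
  Sum.inl_injective (h.eq_of_abs_sub_le hij)

theorem birth_le_of_le_add (h : CriticalValuesSeparated ε b d) {i j : ι}
    (hij : b i ≤ b j + 2 * ε) : b i ≤ b j :=
  h.le_of_le_add (p := .inl i) (q := .inl j) hij

theorem death_le_of_le_add (h : CriticalValuesSeparated ε b d) {i j : ι}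
    (hij : d i ≤ d j + 2 * ε) : d i ≤ d j :=
  h.le_of_le_add (p := .inr i) (q := .inr j) hij

theorem death_le_birth_of_le_add (h : CriticalValuesSeparated ε b d) {i j : ι}
    (hij : d i ≤ b j + 2 * ε) : d i ≤ b j :=
  h.le_of_le_add (p := .inr i) (q := .inl j) hij

end CriticalValuesSeparated

theorem pushTo_transformBasis {K : Type u} [Field K] {N : ℕ} {X : PersistenceModule K}
    {b : Fin N → ℝ} {x : ∀ i, X.space (b i)} {A : Matrix (Fin N) (Fin N) K}
    (hA : ∀ j i, A j i ≠ 0 → b j ≤ b i) {t : ℝ} {i : Fin N} (ht : b i ≤ t) :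
    X.pushTo b (transformBasis X b x A) t i = ∑ j, A j i • X.pushTo b x t j := by
  rw [pushTo_of_le ht]
  exact trans_sum_smul_pushTo ht _ fun j hj => hA j i hj

theorem exists_isMatrixOf {K : Type u} [Field K] {X Y : PersistenceModule K} {ε : ℝ} {N M : ℕ}
    (α : EpsMorphism X Y ε) (bX dX : Fin N → ℝ) (x : ∀ i, X.space (bX i))
    {bY dY : Fin M → ℝ} {y : ∀ j, Y.space (bY j)} (hY : Y.IsBasisFamily bY dY y) :
    ∃ A, IsMatrixOf α bX dX x bY dY y A := by
  choose c hc hsum using fun i =>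
    hY.exists_eq_sum_smul_pushTo (α.maps (bX i) (bX i + ε) rfl (x i))
  exact ⟨.of fun j i => c i j, hsum, fun j i h => hc i j h⟩

theorem isMatrixOf_one {K : Type u} [Field K] {X Y : PersistenceModule K} {ε : ℝ} {N : ℕ}
    {α : EpsMorphism X Y ε} {bX dX : Fin N → ℝ} {x : ∀ i, X.space (bX i)}
    {bY dY : Fin N → ℝ} {y : ∀ j, Y.space (bY j)}
    (hα : ∀ i, α.maps (bX i) (bX i + ε) rfl (x i) = Y.pushTo bY y (bX i + ε) i)
    (halive : ∀ i, bX i + ε ∈ Set.Ico (bY i) (dY i)) :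
    IsMatrixOf α bX dX x bY dY y 1 :=
  ⟨fun i => by rw [hα, sum_one_smul_pushTo],
    fun j i hji => Matrix.one_apply_ne fun hij => hji (hij ▸ halive j)⟩

namespace IsMatrixOf

section

variable {K : Type u} [Field K] {X Y : PersistenceModule K} {ε : ℝ} {N M : ℕ}
  {α : EpsMorphism X Y ε} {bX dX : Fin N → ℝ} {x : ∀ i, X.space (bX i)}
  {bY dY : Fin M → ℝ} {y : ∀ j, Y.space (bY j)} {A : Matrix (Fin M) (Fin N) K}

theorem mem_Ico_of_ne_zero (hA : IsMatrixOf α bX dX x bY dY y A) {j : Fin M} {i : Fin N}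
    (h : A j i ≠ 0) : bX i + ε ∈ Set.Ico (bY j) (dY j) :=
  not_not.1 (mt (hA.2 j i) h)

theorem maps_pushTo (hA : IsMatrixOf α bX dX x bY dY y A) {v : ℝ} {i : Fin N} (hv : bX i ≤ v) :
    α.maps v (v + ε) rfl (X.pushTo bX x v i) = ∑ j, A j i • Y.pushTo bY y (v + ε) j := by
  rw [pushTo_of_le hv, α.comm (bX i) v (bX i + ε) (v + ε) rfl rfl hv, hA.1 i,
    trans_sum_smul_pushTo]
  exact fun j hj => (hA.mem_Ico_of_ne_zero hj).1

theorem maps_sum_smul_pushTo (hA : IsMatrixOf α bX dX x bY dY y A) {v : ℝ} (c : Fin N → K)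
    (hc : ∀ i, c i ≠ 0 → bX i ≤ v) :
    α.maps v (v + ε) rfl (∑ i, c i • X.pushTo bX x v i)
      = ∑ j, (A *ᵥ c) j • Y.pushTo bY y (v + ε) j := by
  rw [map_sum]
  calc ∑ i, α.maps v (v + ε) rfl (c i • X.pushTo bX x v i)
      = ∑ i, ∑ j, (A j i * c i) • Y.pushTo bY y (v + ε) j := by
        refine Finset.sum_congr rfl fun i _ => ?_
        by_cases hi : c i = 0
        · simp [hi]
        · rw [map_smul, hA.maps_pushTo (hc i hi), Finset.smul_sum]
          simp only [smul_smul, mul_comm]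
    _ = ∑ j, (A *ᵥ c) j • Y.pushTo bY y (v + ε) j := by
        rw [Finset.sum_comm]
        simp only [mulVec, dotProduct, Finset.sum_smul]

/-- Since `α` commutes with the transition maps and `x i` dies at `dX i`, the image of `x i`
dies by `dX i + ε`. -/
theorem death_le_of_ne_zero (hX : X.IsBasisFamily bX dX x) (hY : Y.IsBasisFamily bY dY y)
    (hA : IsMatrixOf α bX dX x bY dY y A) {j : Fin M} {i : Fin N} (h : A j i ≠ 0) :
    dY j ≤ dX i + ε := by
  by_contra! hlt
  set t := max (bX i) (dX i)
  have hbt : bX i ≤ t := le_max_left _ _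
  have hmem := hA.mem_Ico_of_ne_zero h
  have hvanish :
      ∑ j, A j i • Y.pushTo bY y (t + ε) j = ∑ j, (0 : K) • Y.pushTo bY y (t + ε) j := by
    rw [← trans_sum_smul_pushTo (by linarith) _ fun j hj => (hA.mem_Ico_of_ne_zero hj).1,
      ← hA.1 i, ← α.comm (bX i) t (bX i + ε) (t + ε) rfl rfl hbt,
      hX.trans_eq_zero_of_death_le hbt (le_max_right _ _)]
    simp
  refine h (hY.sum_smul_pushTo_inj.1 hvanish j ⟨hmem.1.trans (by linarith), ?_⟩)
  have := max_lt (show bX i < dY j - ε by linarith [hmem.2]) (show dX i < dY j - ε by linarith)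
  linarith

/-- Read off from `β ∘ α = φ^{2ε}`. -/
theorem mul_apply_eq_one_apply {β : EpsMorphism Y X ε} {C : Matrix (Fin N) (Fin M) K}
    (hε : 0 ≤ ε) (hX : X.IsBasisFamily bX dX x) (hαβ : IsInterleaving X Y ε α β)
    (hA : IsMatrixOf α bX dX x bY dY y A) (hC : IsMatrixOf β bY dY y bX dX x C) {i k : Fin N}
    (hk : bX i + ε + ε ∈ Set.Ico (bX k) (dX k)) :
    (C * A) k i = (1 : Matrix (Fin N) (Fin N) K) k i := by
  have hβα := hαβ.1 (bX i) (bX i + ε + ε) rfl (by linarith) (x i)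
  rw [hA.1 i, hC.maps_sum_smul_pushTo _ fun j hj => (hA.mem_Ico_of_ne_zero hj).1,
    ← pushTo_of_le, ← sum_one_smul_pushTo] at hβα
  exact hX.sum_smul_pushTo_inj.1 hβα k hk

end

section

variable {K : Type u} [Field K] {X Y : PersistenceModule K} {ε : ℝ} {N : ℕ}
  {α : EpsMorphism X Y ε} {bX dX bY dY : Fin N → ℝ} {x : ∀ i, X.space (bX i)}
  {y : ∀ j, Y.space (bY j)} {A : Matrix (Fin N) (Fin N) K}

theorem transformBasis_one (hA : IsMatrixOf α bX dX x bY dY y A)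
    (hbirth : ∀ j i, A j i ≠ 0 → bY j ≤ bY i)
    (halive : ∀ i, bX i + ε ∈ Set.Ico (bY i) (dY i)) :
    IsMatrixOf α bX dX x bY dY (transformBasis Y bY y A) 1 :=
  isMatrixOf_one (fun i => by rw [pushTo_transformBasis hbirth (halive i).1, hA.1 i]) halive

/-- Off the diagonal, `y_j` would have to be born within `ε` of `bX i` on both sides. -/
theorem mul_apply_self {β : EpsMorphism Y X ε} {C : Matrix (Fin N) (Fin N) K}
    (hsep : CriticalValuesSeparated ε bY dY) (hA : IsMatrixOf α bX dX x bY dY y A)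
    (hC : IsMatrixOf β bY dY y bX dX x C) {i : Fin N} (hi : |bX i - bY i| < ε) :
    (C * A) i i = C i i * A i i := by
  rw [Matrix.mul_apply, Finset.sum_eq_single i (fun j _ hji => ?_) (absurd (Finset.mem_univ i))]
  by_contra hne
  obtain ⟨hCij, hAji⟩ := mul_ne_zero_iff.1 hne
  exact hji (hsep.eq_of_abs_birth_sub_le (abs_sub_le_iff.2
    ⟨by linarith [(hA.mem_Ico_of_ne_zero hAji).1, abs_lt.1 hi],
      by linarith [(hC.mem_Ico_of_ne_zero hCij).1, abs_lt.1 hi]⟩))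

theorem transformBasis_one_of_mul {β : EpsMorphism Y X ε} {C : Matrix (Fin N) (Fin N) K}
    (hX : X.IsBasisFamily bX dX x) (hC : IsMatrixOf β bY dY y bX dX x C)
    (hbirth : ∀ j i, A j i ≠ 0 → bY j ≤ bY i)
    (hCA : ∀ i k, bY i + ε ∈ Set.Ico (bX k) (dX k) → (C * A) k i = (1 : Matrix _ _ K) k i)
    (halive : ∀ i, bY i + ε ∈ Set.Ico (bX i) (dX i)) :
    IsMatrixOf β bY dY (transformBasis Y bY y A) bX dX x 1 := by
  refine isMatrixOf_one (fun i => ?_) halive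
  rw [transformBasis, hC.maps_sum_smul_pushTo _ fun j hj => hbirth j i hj, ← sum_one_smul_pushTo]
  exact hX.sum_smul_pushTo_inj.2 (hCA i)

end

end IsMatrixOf

theorem statement6_general {K : Type u} [Field K] {N : ℕ}
    (X Y : PersistenceModule K) (ε : ℝ) (hε : 0 ≤ ε)
    (bX dX bY dY : Fin N → ℝ)
    (x : ∀ i, X.space (bX i)) (y : ∀ i, Y.space (bY i))
    (hbdX : ∀ i, bX i < dX i)
    (hX : X.IsBasisFamily bX dX x) (hY : Y.IsBasisFamily bY dY y)
    (hgapX : ∀ p q : Fin N ⊕ Fin N, p ≠ q →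
        2 * ε < |Sum.elim bX dX p - Sum.elim bX dX q|)
    (hgapY : ∀ p q : Fin N ⊕ Fin N, p ≠ q →
        2 * ε < |Sum.elim bY dY p - Sum.elim bY dY q|)
    (F : EpsMorphism X Y ε) (G : EpsMorphism Y X ε)
    (hFG : IsInterleaving X Y ε F G)
    (hb : ∀ i, |bX i - bY i| < ε) (hd : ∀ i, |dX i - dY i| < ε)
    (A : Matrix (Fin N) (Fin N) K)
    (hA : IsMatrixOf F bX dX x bY dY y A) :
    IsBasisTransformMatrix bY dY A ∧
    IsMatrixOf F bX dX x bY dY (transformBasis Y bY y A)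
      (1 : Matrix (Fin N) (Fin N) K) ∧
    IsMatrixOf G bY dY (transformBasis Y bY y A) bX dX x
      (1 : Matrix (Fin N) (Fin N) K) := by
  have hsepX : CriticalValuesSeparated ε bX dX := hgapX
  have hsepY : CriticalValuesSeparated ε bY dY := hgapY
  obtain ⟨C, hC⟩ := exists_isMatrixOf G bY dY y hX
  have hlong (i) : bX i + 2 * ε < dX i :=
    lt_of_not_ge fun h => (hbdX i).not_ge (hsepX.death_le_birth_of_le_add h)
  have hbirth (j i) (h : A j i ≠ 0) : bY j ≤ bY i := hsepY.birth_le_of_le_add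
    (by linarith [(hA.mem_Ico_of_ne_zero h).1, abs_lt.1 (hb i)])
  have hdeath (j i) (h : A j i ≠ 0) : dY j ≤ dY i := hsepY.death_le_of_le_add
    (by linarith [hA.death_le_of_ne_zero hX hY h, abs_lt.1 (hd i)])
  have hCA (i k) (hk : bY i + ε ∈ Set.Ico (bX k) (dX k)) :
      (C * A) k i = (1 : Matrix _ _ K) k i :=
    hA.mul_apply_eq_one_apply hε hX hFG hC ⟨by linarith [hk.1, abs_lt.1 (hb i)],
      lt_of_not_ge fun h => by
        linarith [hk.2, abs_lt.1 (hb i), hsepX.death_le_birth_of_le_add (j := i) (by linarith)]⟩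
  have hGalive (i) : bY i + ε ∈ Set.Ico (bX i) (dX i) :=
    ⟨by linarith [abs_lt.1 (hb i)], by linarith [abs_lt.1 (hb i), hlong i]⟩
  have hFalive (i) : bX i + ε ∈ Set.Ico (bY i) (dY i) :=
    ⟨by linarith [abs_lt.1 (hb i)], by linarith [abs_lt.1 (hd i), hlong i]⟩
  have hdiag (i) : A i i ≠ 0 := right_ne_zero_of_mul (a := C i i) <| by
    rw [← hA.mul_apply_self hsepY hC (hb i), hCA i i (hGalive i), Matrix.one_apply_eq]
    exact one_ne_zero
  exact ⟨⟨hdiag, fun j i h => ⟨hbirth j i h, hdeath j i h⟩⟩,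
    hA.transformBasis_one hbirth hFalive,
    hC.transformBasis_one_of_mul hX hbirth hCA hGalive⟩

/-- (Proposition `boring`.) For persistence modules `X` and `Y` whose critical
values are pairwise distinct with gaps `> 2ε`, an `ε`-interleaving `(α, β)`, and matched bases,
the matrix of `α` is a basis transformation matrix for `Y`, and with respect to the transformed
basis of `Y` both `Mat(α)` and `Mat(β)` are the identity. -/
theorem statement6 {K : Type u} [Field K] {N : ℕ}
    (X Y : PersistenceModule K) (ε : ℝ) (hε : 0 ≤ ε)
    (bX dX bY dY : Fin N → ℝ)
    (x : ∀ i, X.space (bX i)) (y : ∀ i, Y.space (bY i))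
    (hbdX : ∀ i, bX i < dX i) (hbdY : ∀ i, bY i < dY i)
    (hdistX : Function.Injective fun i => (bX i, dX i))
    (hdistY : Function.Injective fun i => (bY i, dY i))
    (hX : X.IsBasisFamily bX dX x) (hY : Y.IsBasisFamily bY dY y)
    (hgapX : ∀ p q : Fin N ⊕ Fin N, p ≠ q →
        2 * ε < |Sum.elim bX dX p - Sum.elim bX dX q|)
    (hgapY : ∀ p q : Fin N ⊕ Fin N, p ≠ q →
        2 * ε < |Sum.elim bY dY p - Sum.elim bY dY q|)
    (F : EpsMorphism X Y ε) (G : EpsMorphism Y X ε)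
    (hFG : IsInterleaving X Y ε F G)
    (hb : ∀ i, |bX i - bY i| < ε) (hd : ∀ i, |dX i - dY i| < ε)
    (A : Matrix (Fin N) (Fin N) K)
    (hA : IsMatrixOf F bX dX x bY dY y A) :
    IsBasisTransformMatrix bY dY A ∧
    IsMatrixOf F bX dX x bY dY (transformBasis Y bY y A)
      (1 : Matrix (Fin N) (Fin N) K) ∧
    IsMatrixOf G bY dY (transformBasis Y bY y A) bX dX x
      (1 : Matrix (Fin N) (Fin N) K) :=
  statement6_general X Y ε hε bX dX bY dY x y hbdX hX hY hgapX hgapY F G hFG hb hd A hA
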